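/- Let t be the 4-dimensional complex Lie algebra with basis {a,b,c,d} and nonzero brackets [a,b] = c, [c,b] = d, and let r := a∧c + d∧b ∈ Λ²t. Then the kernel of the cobracket δ(x) = [x⊗1 + 1⊗x, r] is the abelian ideal spanned by c and d, which is strictly contained in the abelian ideal spanned by a, c, d; in particular ker δ is not a maximal abelian subalgebra of t. -/

import Mathlib

/-!
The cobracket is linear in `r`, and for a wedge `u ∧ v` it is `[x,u] ∧ v + u ∧ [x,v]`. From
the brackets one reads off `δ a = d ∧ c`, `δ b = d ∧ a`, `δ c = δ d = 0`, so
`δ x = x_a • (d ∧ c) + x_b • (d ∧ a)` in coordinates. The tensors `d ∧ c` and `d ∧ a` are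
independent (their `d ⊗ c` and `d ⊗ a` coordinates separate them), hence `ker δ = span {c, d}`.
Since `[a, c] = [a, d] = [c, d] = 0` and `[t, t] ⊆ span {c, d}`, both `span {c, d}` and
`span {a, c, d}` are abelian ideals, and `a ∉ span {c, d}`.
-/

open TensorProduct

noncomputable section

variable {t : Type} [LieRing t] [LieAlgebra ℂ t]

attribute [local instance 100] LieRing.ofAssociativeRing

/-- The cobracket `δ(x) = [x ⊗ 1 + 1 ⊗ x, r] = (ad x ⊗ id + id ⊗ ad x)(r)`. -/
def cobracket (r : t ⊗[ℂ] t) : t →ₗ[ℂ] t ⊗[ℂ] t :=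
  (((LinearMap.rTensorHom t + LinearMap.lTensorHom t)
      ∘ₗ (LieAlgebra.ad ℂ t).toLinearMap).flip) r

section Span

variable {R L : Type*} [CommRing R] [LieRing L] [LieAlgebra R L]

theorem lie_mem_of_mem_span_of_mem_span {s₁ s₂ : Set L} {p : Submodule R L}
    (h : ∀ u ∈ s₁, ∀ v ∈ s₂, ⁅u, v⁆ ∈ p) {x y : L} (hx : x ∈ Submodule.span R s₁)
    (hy : y ∈ Submodule.span R s₂) : ⁅x, y⁆ ∈ p := by
  have : Submodule.map₂ (LieAlgebra.ad R L : L →ₗ[R] Module.End R L)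
      (Submodule.span R s₁) (Submodule.span R s₂) ≤ p := by
    rw [Submodule.map₂_span_span, Submodule.span_le]
    rintro _ ⟨u, hu, v, hv, rfl⟩
    exact h u hu v hv
  exact this (Submodule.apply_mem_map₂ _ hx hy)

theorem lie_eq_zero_of_mem_span {s : Set L} (h : ∀ u ∈ s, ∀ v ∈ s, ⁅u, v⁆ = 0) {x y : L}
    (hx : x ∈ Submodule.span R s) (hy : y ∈ Submodule.span R s) : ⁅x, y⁆ = 0 :=
  (Submodule.mem_bot R).mp <|
    lie_mem_of_mem_span_of_mem_span (fun u hu v hv ↦ (Submodule.mem_bot R).mpr (h u hu v hv))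
      hx hy

theorem lie_mem_span_of_forall_basis {ι : Type*} (B : Module.Basis ι R L) {s : Set L}
    (h : ∀ i, ∀ v ∈ s, ⁅B i, v⁆ ∈ Submodule.span R s) (x : L) {y : L}
    (hy : y ∈ Submodule.span R s) : ⁅x, y⁆ ∈ Submodule.span R s :=
  lie_mem_of_mem_span_of_mem_span (s₁ := Set.range B) (by rintro _ ⟨i, rfl⟩; exact h i)
    (B.span_eq ▸ Submodule.mem_top) hy

end Span

theorem Module.Basis.mem_span_two_three_iff {R M : Type*} [CommRing R] [AddCommGroup M]
    [Module R M] (B : Module.Basis (Fin 4) R M) {x : M} :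
    x ∈ Submodule.span R {B 2, B 3} ↔ B.repr x 0 = 0 ∧ B.repr x 1 = 0 := by
  rw [← Set.image_pair, B.mem_span_image, Finsupp.support_subset_iff]
  refine ⟨fun h ↦ ⟨h 0 (by simp), h 1 (by simp)⟩, ?_⟩
  rintro ⟨h0, h1⟩ i hi
  fin_cases i <;> simp_all

local notation:70 u:71 " ∧ₜ " v:71 => u ⊗ₜ[ℂ] v - v ⊗ₜ[ℂ] u

theorem cobracket_add (r s : t ⊗[ℂ] t) : cobracket (r + s) = cobracket r + cobracket s :=
  map_add _ r s

theorem cobracket_wedge (u v x : t) :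
    cobracket (u ∧ₜ v) x = ⁅x, u⁆ ∧ₜ v + u ∧ₜ ⁅x, v⁆ := by
  simp only [cobracket, map_sub, LinearMap.sub_apply, LinearMap.flip_apply, LinearMap.coe_comp,
    LieHom.coe_toLinearMap, Function.comp_apply, LinearMap.add_apply, LinearMap.coe_rTensorHom,
    LinearMap.coe_lTensorHom, LinearMap.rTensor_tmul, LieAlgebra.ad_apply, LinearMap.lTensor_tmul]
  abel

def lieTable {L : Type*} [LieRing L] (B : Fin 4 → L) : Fin 4 → Fin 4 → L :=
  ![![0, B 2, 0, 0], ![-B 2, 0, -B 3, 0], ![0, B 3, 0, 0], ![0, 0, 0, 0]]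

theorem lie_basis_eq_lieTable {L : Type*} [LieRing L] {B : Fin 4 → L}
    (hab : ⁅B 0, B 1⁆ = B 2) (hcb : ⁅B 2, B 1⁆ = B 3)
    (hac : ⁅B 0, B 2⁆ = 0) (had : ⁅B 0, B 3⁆ = 0)
    (hbd : ⁅B 1, B 3⁆ = 0) (hcd : ⁅B 2, B 3⁆ = 0) (i j : Fin 4) :
    ⁅B i, B j⁆ = lieTable B i j := by
  fin_cases i <;> fin_cases j <;>
    first
    | simp [lieTable, hab, hcb, hac, had, hbd, hcd]; done
    | rw [← lie_skew]; simp [lieTable, hab, hcb, hac, had, hbd, hcd]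

section Table

variable {B : Module.Basis (Fin 4) ℂ t}

theorem cobracket_apply_eq_repr (hB : ∀ i j, ⁅B i, B j⁆ = lieTable B i j) (x : t) :
    cobracket (B 0 ∧ₜ B 2 + B 3 ∧ₜ B 1) x =
      B.repr x 0 • (B 3 ∧ₜ B 2) + B.repr x 1 • (B 3 ∧ₜ B 0) := by
  have hbasis : cobracket (B 0 ∧ₜ B 2 + B 3 ∧ₜ B 1) = (B.coord 0).smulRight (B 3 ∧ₜ B 2)
      + (B.coord 1).smulRight (B 3 ∧ₜ B 0) := by
    refine B.ext fun i ↦ ?_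
    fin_cases i <;>
      simp [cobracket_add, cobracket_wedge, hB, lieTable, neg_tmul, tmul_neg, neg_add_eq_sub]
  simp [hbasis]

theorem ker_cobracket_eq_span (hB : ∀ i j, ⁅B i, B j⁆ = lieTable B i j) :
    LinearMap.ker (cobracket (B 0 ∧ₜ B 2 + B 3 ∧ₜ B 1)) = Submodule.span ℂ {B 2, B 3} := by
  ext x
  rw [LinearMap.mem_ker, cobracket_apply_eq_repr hB, B.mem_span_two_three_iff]
  refine ⟨fun h ↦ ⟨?_, ?_⟩, fun ⟨h0, h1⟩ ↦ by simp [h0, h1]⟩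
  · simpa [Module.Basis.tensorProduct_repr_tmul_apply, Module.Basis.repr_self_apply]
      using congrArg (fun z ↦ (B.tensorProduct B).repr z (3, 2)) h
  · simpa [Module.Basis.tensorProduct_repr_tmul_apply, Module.Basis.repr_self_apply]
      using congrArg (fun z ↦ (B.tensorProduct B).repr z (3, 0)) h

theorem lie_mem_span_two_three (hB : ∀ i j, ⁅B i, B j⁆ = lieTable B i j) (x : t) {y : t}
    (hy : y ∈ Submodule.span ℂ {B 2, B 3}) : ⁅x, y⁆ ∈ Submodule.span ℂ {B 2, B 3} := by
  refine lie_mem_span_of_forall_basis B (fun i v hv ↦ ?_) x hy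
  rcases hv with rfl | rfl <;> fin_cases i <;> simp [hB, lieTable, Submodule.mem_span_of_mem]

theorem lie_mem_span_zero_two_three (hB : ∀ i j, ⁅B i, B j⁆ = lieTable B i j) (x : t) {y : t}
    (hy : y ∈ Submodule.span ℂ {B 0, B 2, B 3}) : ⁅x, y⁆ ∈ Submodule.span ℂ {B 0, B 2, B 3} := by
  refine lie_mem_span_of_forall_basis B (fun i v hv ↦ ?_) x hy
  rcases hv with rfl | rfl | rfl <;> fin_cases i <;> simp [hB, lieTable, Submodule.mem_span_of_mem]

theorem lie_eq_zero_of_mem_span_zero_two_three (hB : ∀ i j, ⁅B i, B j⁆ = lieTable B i j) :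
    ∀ x ∈ Submodule.span ℂ {B 0, B 2, B 3}, ∀ y ∈ Submodule.span ℂ {B 0, B 2, B 3},
      ⁅x, y⁆ = 0 := by
  refine fun x hx y hy ↦ lie_eq_zero_of_mem_span (fun u hu v hv ↦ ?_) hx hy
  rcases hu with rfl | rfl | rfl <;> rcases hv with rfl | rfl | rfl <;> simp [hB, lieTable]

end Table

theorem Module.Basis.span_two_three_lt_span_zero_two_three {R M : Type*} [CommRing R]
    [Nontrivial R] [AddCommGroup M] [Module R M] (B : Module.Basis (Fin 4) R M) :
    Submodule.span R {B 2, B 3} < Submodule.span R {B 0, B 2, B 3} := by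
  refine SetLike.lt_iff_le_and_exists.mpr ⟨Submodule.span_mono (by simp), B 0,
    Submodule.subset_span (by simp), ?_⟩
  simp [B.mem_span_two_three_iff]

theorem ker_cobracket_not_maximal_abelian
    (B : Module.Basis (Fin 4) ℂ t)
    (hab : ⁅B 0, B 1⁆ = B 2) (hcb : ⁅B 2, B 1⁆ = B 3)
    (hac : ⁅B 0, B 2⁆ = 0) (had : ⁅B 0, B 3⁆ = 0)
    (hbd : ⁅B 1, B 3⁆ = 0) (hcd : ⁅B 2, B 3⁆ = 0) :
    let r : t ⊗[ℂ] t :=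
      B 0 ⊗ₜ[ℂ] B 2 - B 2 ⊗ₜ[ℂ] B 0 + B 3 ⊗ₜ[ℂ] B 1 - B 1 ⊗ₜ[ℂ] B 3
    LinearMap.ker (cobracket r) = Submodule.span ℂ {B 2, B 3}
    ∧ (∀ x ∈ Submodule.span ℂ {B 2, B 3}, ∀ y ∈ Submodule.span ℂ {B 2, B 3},
        ⁅x, y⁆ = (0 : t))
    ∧ (∀ x : t, ∀ y ∈ Submodule.span ℂ {B 2, B 3},
        ⁅x, y⁆ ∈ Submodule.span ℂ {B 2, B 3})
    ∧ Submodule.span ℂ {B 2, B 3} < Submodule.span ℂ {B 0, B 2, B 3}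
    ∧ (∀ x ∈ Submodule.span ℂ {B 0, B 2, B 3}, ∀ y ∈ Submodule.span ℂ {B 0, B 2, B 3},
        ⁅x, y⁆ = (0 : t))
    ∧ (∀ x : t, ∀ y ∈ Submodule.span ℂ {B 0, B 2, B 3},
        ⁅x, y⁆ ∈ Submodule.span ℂ {B 0, B 2, B 3})
    ∧ ∃ S : LieSubalgebra ℂ t, IsLieAbelian S ∧
        (LinearMap.ker (cobracket r) : Set t) ⊂ (S : Set t) := by
  intro r
  have hB := lie_basis_eq_lieTable hab hcb hac had hbd hcd
  have hker : LinearMap.ker (cobracket r) = Submodule.span ℂ {B 2, B 3} := by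
    rw [show r = B 0 ∧ₜ B 2 + B 3 ∧ₜ B 1 from add_sub_assoc _ _ _, ker_cobracket_eq_span hB]
  have hlt := B.span_two_three_lt_span_zero_two_three
  have habel := lie_eq_zero_of_mem_span_zero_two_three hB
  have hideal := lie_mem_span_zero_two_three hB
  let S : LieSubalgebra ℂ t :=
    { toSubmodule := Submodule.span ℂ {B 0, B 2, B 3}, lie_mem' := fun _ hy ↦ hideal _ hy }
  refine ⟨hker, fun x hx y hy ↦ habel x (hlt.le hx) y (hlt.le hy), lie_mem_span_two_three hB,
    hlt, habel, hideal, S, ⟨fun x y ↦ Subtype.ext (habel x x.2 y y.2)⟩, ?_⟩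
  rw [hker]
  exact SetLike.coe_ssubset_coe.mpr hlt
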